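/- arXiv:2507.22138 — 8 statements merged into one kernel-verified Lean document; each statement's English description precedes it below -/
import Mathlib

section
/- Let u be a nonzero vector in ℝⁿ and let f : ℝⁿ → ℝ be smooth and compactly supported. Then for every x ∈ ℝⁿ: (a) the directional derivative of the divergent beam transform 𝒳_u f along u at x equals f(x), i.e. fderiv ℝ (𝒳_u f) x u = f x; and (b) the divergent beam transform of the directional derivative of f along u equals f, i.e. (𝒳_u (fun y => fderiv ℝ f y u)) x = f x. In other words, 𝒟_u ∘ 𝒳_u and 𝒳_u ∘ 𝒟_u both act as the identity on compactly supported smooth functions. -/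
open MeasureTheory

/-- The divergent beam transform `𝒳_u f` on `ℝⁿ`:
`(𝒳_u f)(x) = ∫_{-∞}^0 f(x + t • u) dt`. -/
noncomputable def beam {n : ℕ} (u : EuclideanSpace ℝ (Fin n))
    (f : EuclideanSpace ℝ (Fin n) → ℝ) (x : EuclideanSpace ℝ (Fin n)) : ℝ :=
  ∫ t in Set.Iio (0 : ℝ), f (x + t • u)

/-!
Since `u ≠ 0`, `t ↦ f (x + t • u)` is compactly supported, so (b) is the fundamental theorem of
calculus on `(-∞, 0]`. For (a), all lines `y + ℝ u` with `y` in a compact neighbourhood of `x`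
meet `tsupport (fderiv ℝ f)` in one bounded range of parameters; this dominates the integrand and
lets us differentiate under the integral sign, so `𝒟_u 𝒳_u f = 𝒳_u 𝒟_u f`, and (a) follows from (b).
-/

open Set Filter Topology Pointwise

section

variable {E V : Type*} [NormedAddCommGroup E] [NormedSpace ℝ E] [NormedAddCommGroup V] {u : E}

lemma HasCompactSupport.comp_add_smul {h : E → V} (hh : HasCompactSupport h) (hu : u ≠ 0)
    (x : E) : HasCompactSupport fun t : ℝ => h (x + t • u) :=
  hh.comp_isClosedEmbedding
    ((Homeomorph.addLeft x).isClosedEmbedding.comp (isClosedEmbedding_smul_left hu))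

lemma Continuous.integrable_comp_add_smul {h : E → V} (hc : Continuous h)
    (hh : HasCompactSupport h) (hu : u ≠ 0) (x : E) :
    Integrable fun t : ℝ => h (x + t • u) :=
  (hc.comp (by fun_prop : Continuous fun t : ℝ => x + t • u)).integrable_of_hasCompactSupport
    (hh.comp_add_smul hu x)

lemma Continuous.exists_integrable_bound_comp_add_smul {h : E → V} (hc : Continuous h)
    (hh : HasCompactSupport h) (hu : u ≠ 0) {B : Set E} (hB : IsCompact B) :
    ∃ g : ℝ → ℝ, Integrable g ∧ ∀ y ∈ B, ∀ t : ℝ, ‖h (y + t • u)‖ ≤ g t := by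
  obtain ⟨C, hC⟩ := hc.bounded_above_of_compact_support hh
  let S := (fun t : ℝ => t • u) ⁻¹' (tsupport h + -B)
  have hS : IsCompact S :=
    (isClosedEmbedding_smul_left hu).isCompact_preimage (hh.isCompact.add hB.neg)
  refine ⟨S.indicator fun _ => C, (integrableOn_const hS.measure_lt_top.ne).integrable_indicator
    hS.measurableSet, fun y hy t => ?_⟩
  by_cases ht : t ∈ S
  · rw [indicator_of_mem ht]
    exact hC _
  · have hy' : y + t • u ∉ tsupport h := fun hmem => ht <| show t • u ∈ _ by
      simpa only [add_neg_cancel_comm] using add_mem_add hmem (neg_mem_neg.mpr hy)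
    rw [indicator_of_notMem ht, image_eq_zero_of_notMem_tsupport hy', norm_zero]

variable {F : Type*} [NormedAddCommGroup F] [NormedSpace ℝ F] {f : E → F}

lemma ContDiff.integral_Iio_fderiv_comp_add_smul [CompleteSpace F] (hf : ContDiff ℝ 1 f)
    (hsupp : HasCompactSupport f) (hu : u ≠ 0) (x : E) :
    ∫ t in Iio (0 : ℝ), fderiv ℝ f (x + t • u) u = f x := by
  have hderiv (t : ℝ) :
      HasDerivAt (fun s : ℝ => f (x + s • u)) (fderiv ℝ f (x + t • u) u) t := by
    have hline : HasDerivAt (fun s : ℝ => x + s • u) u t := by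
      simpa using ((hasDerivAt_id t).smul_const u).const_add x
    exact (hf.differentiable one_ne_zero _).hasFDerivAt.comp_hasDerivAt t hline
  have hint : Integrable fun t : ℝ => fderiv ℝ f (x + t • u) u :=
    ((hf.continuous_fderiv one_ne_zero).clm_apply continuous_const).integrable_comp_add_smul
      (hsupp.fderiv_apply ℝ u) hu x
  have hlim : Tendsto (fun t : ℝ => f (x + t • u)) atBot (𝓝 0) :=
    (hsupp.comp_add_smul hu x).is_zero_at_infty.mono_left atBot_le_cocompact
  rw [setIntegral_congr_set Iio_ae_eq_Iic,
    integral_Iic_of_hasDerivAt_of_tendsto' (fun t _ => hderiv t) hint.integrableOn hlim]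
  simp

lemma ContDiff.hasFDerivAt_integral_Iio_comp_add_smul [LocallyCompactSpace E]
    (hf : ContDiff ℝ 1 f) (hsupp : HasCompactSupport f) (hu : u ≠ 0) (x : E) :
    HasFDerivAt (fun y => ∫ t in Iio (0 : ℝ), f (y + t • u))
      (∫ t in Iio (0 : ℝ), fderiv ℝ f (x + t • u)) x := by
  obtain ⟨B, hB, hBx⟩ := exists_compact_mem_nhds x
  have hf' := hf.continuous_fderiv one_ne_zero
  obtain ⟨g, hg, hbound⟩ := hf'.exists_integrable_bound_comp_add_smul (hsupp.fderiv ℝ) hu hB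
  refine hasFDerivAt_integral_of_dominated_of_fderiv_le hBx
    (.of_forall fun y => (hf.continuous.integrable_comp_add_smul hsupp hu y).restrict.1)
    (hf.continuous.integrable_comp_add_smul hsupp hu x).restrict
    (hf'.integrable_comp_add_smul (hsupp.fderiv ℝ) hu x).restrict.1
    (ae_of_all _ fun t y hy => hbound y hy t) hg.restrict (ae_of_all _ fun t y _ => ?_)
  exact (hasFDerivAt_comp_add_right (t • u)).2 (hf.differentiable one_ne_zero _).hasFDerivAt

lemma ContDiff.fderiv_integral_Iio_comp_add_smul_apply [LocallyCompactSpace E] [CompleteSpace F]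
    (hf : ContDiff ℝ 1 f) (hsupp : HasCompactSupport f) (hu : u ≠ 0) (x : E) :
    fderiv ℝ (fun y => ∫ t in Iio (0 : ℝ), f (y + t • u)) x u = f x := by
  have hint := (hf.continuous_fderiv one_ne_zero).integrable_comp_add_smul (hsupp.fderiv ℝ) hu x
  rw [(hf.hasFDerivAt_integral_Iio_comp_add_smul hsupp hu x).fderiv,
    ContinuousLinearMap.integral_apply hint.restrict]
  exact hf.integral_Iio_fderiv_comp_add_smul hsupp hu x

end

/-- `𝒟_u ∘ 𝒳_u` and `𝒳_u ∘ 𝒟_u` act as the identity on smooth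
compactly supported functions. -/
theorem beam_dirDeriv_inverse {n : ℕ} (u : EuclideanSpace ℝ (Fin n)) (hu : u ≠ 0)
    (f : EuclideanSpace ℝ (Fin n) → ℝ) (hf : ContDiff ℝ (⊤ : ℕ∞) f)
    (hsupp : HasCompactSupport f) (x : EuclideanSpace ℝ (Fin n)) :
    fderiv ℝ (beam u f) x u = f x ∧ beam u (fun y => fderiv ℝ f y u) x = f x := by
  have hf1 : ContDiff ℝ 1 f := hf.of_le (by exact_mod_cast le_top)
  exact ⟨hf1.fderiv_integral_Iio_comp_add_smul_apply hsupp hu x,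
    hf1.integral_Iio_fderiv_comp_add_smul hsupp hu x⟩
end

section
/- Let P be a nonzero polynomial in n variables over ℝ (P : MvPolynomial (Fin n) ℝ, P ≠ 0), and let f : ℝⁿ → ℝ be smooth and compactly supported. If f satisfies the constant-coefficient linear PDE determined by P, i.e. for every x ∈ ℝⁿ, Σ_{k ∈ support P} (coeff of P at k) · (∂^k f)(x) = 0, then f = 0. (Equivalently: a nonzero constant-coefficient linear differential operator has no nonzero smooth compactly supported solutions.) -/
/-- The partial derivative in the `j`-th coordinate direction. -/
noncomputable def pd {n : ℕ} (j : Fin n) (f : EuclideanSpace ℝ (Fin n) → ℝ) :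
    EuclideanSpace ℝ (Fin n) → ℝ :=
  fun x => fderiv ℝ f x (EuclideanSpace.single j 1)

/-- The iterated mixed partial derivative `∂^k f` for a multi-index `k : Fin n → ℕ`:
for each coordinate `j` apply the `j`-th partial derivative `k j` times. -/
noncomputable def mpd {n : ℕ} (k : Fin n → ℕ) (f : EuclideanSpace ℝ (Fin n) → ℝ) :
    EuclideanSpace ℝ (Fin n) → ℝ :=
  (List.finRange n).foldr (fun j g => (pd j)^[k j] g) f

/-!
Complexify `f` to a Schwartz function `φ`. The Fourier transform turns `∂ⱼ` into multiplication by
`2πi ξⱼ`, so the equation becomes `Q(ξ) · 𝓕φ(ξ) = 0` with `Q(ξ) = P(2πi ξ)`. If `𝓕φ` did not vanish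
identically, `Q` would vanish on a grid of `(deg P + 1)ⁿ` points inside the open set `{𝓕φ ≠ 0}`,
so the nonzero polynomial `P` would vanish on `2πi` times that grid, contradicting the
Combinatorial Nullstellensatz. Hence `𝓕φ = 0`, and Fourier inversion gives `φ = 0`.
-/

open MvPolynomial LineDeriv FourierTransform Complex Real
open scoped SchwartzMap RealInnerProductSpace

theorem MvPolynomial.eq_zero_of_eval_eq_zero_on_isOpen {R ι : Type*} [CommRing R] [IsDomain R]
    [Fintype ι] {p : MvPolynomial ι R} {g : ℝ → R} (hg : g.Injective) {U : Set (ι → ℝ)}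
    (hU : IsOpen U) (hne : U.Nonempty) (h : ∀ x ∈ U, eval (g ∘ x) p = 0) : p = 0 := by
  obtain ⟨x₀, hx₀⟩ := hne
  obtain ⟨ε, hε, hball⟩ := Metric.isOpen_iff.1 hU x₀ hx₀
  have hT : ∀ i, ∃ T : Finset ℝ, ↑T ⊆ Metric.ball (x₀ i) ε ∧ T.card = p.totalDegree + 1 :=
    fun i => (Real.ball_eq_Ioo (x₀ i) ε ▸ Set.Ioo_infinite (by linarith)).exists_subset_card_eq _
  choose T hTball hTcard using hT
  refine eq_zero_of_eval_zero_at_prod_finset p (fun i => (T i).map ⟨g, hg⟩) (fun i => ?_) ?_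
  · rw [Finset.card_map, hTcard]
    exact Nat.lt_succ_of_le (degreeOf_le_totalDegree p i)
  · intro y hy
    simp only [Finset.mem_map, Function.Embedding.coeFn_mk] at hy
    choose x hxT hxy using hy
    have hxU : x ∈ U := hball <| (ball_pi x₀ hε).symm ▸ fun i _ => hTball i (hxT i)
    have hyx : y = g ∘ x := by ext i; exact (hxy i).symm
    exact hyx ▸ h x hxU

theorem Continuous.eq_zero_of_eval_mul_eq_zero {R ι : Type*} [CommRing R] [IsDomain R]
    [TopologicalSpace R] [T1Space R] [Fintype ι] {u : (ι → ℝ) → R} (hu : Continuous u)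
    {p : MvPolynomial ι R} (hp : p ≠ 0) {g : ℝ → R} (hg : g.Injective)
    (h : ∀ x, eval (g ∘ x) p * u x = 0) : u = 0 := by
  by_contra hu0
  obtain ⟨x, hx⟩ := Function.ne_iff.1 hu0
  exact hp <| eq_zero_of_eval_eq_zero_on_isOpen hg (isOpen_compl_singleton.preimage hu) ⟨x, hx⟩
    fun y hy => (mul_eq_zero.1 (h y)).resolve_right hy

namespace SchwartzMap

section LineDeriv

variable {V : Type*} [NormedAddCommGroup V] [InnerProductSpace ℝ V]

theorem lineDerivOp_apply_of_eq_ofReal {f : V → ℝ} {ψ : 𝓢(V, ℂ)} (hψ : ∀ x, ψ x = f x)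
    (m x : V) : ∂_{m} ψ x = fderiv ℝ f x m := by
  have hf : Differentiable ℝ f := by
    rw [show f = reCLM ∘ ψ by ext x; simp [hψ]]
    exact reCLM.differentiable.comp ψ.differentiable
  have hdf : HasFDerivAt (fun x => (f x : ℂ)) (ofRealCLM.comp (fderiv ℝ f x)) x :=
    ofRealCLM.hasFDerivAt.comp x (hf x).hasFDerivAt
  rw [lineDerivOp_apply_eq_fderiv, show ⇑ψ = fun x => (f x : ℂ) from funext hψ, hdf.fderiv]
  rfl

variable [FiniteDimensional ℝ V] [MeasurableSpace V] [BorelSpace V]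
  {F : Type*} [NormedAddCommGroup F] [NormedSpace ℂ F]

theorem fourier_iterate_lineDerivOp (ψ : 𝓢(V, F)) (m : V) (k : ℕ) (ξ : V) :
    𝓕 (⇑((∂_{m})^[k] ψ)) ξ = (2 * π * I * ⟪ξ, m⟫) ^ k • 𝓕 (⇑ψ) ξ := by
  induction k with
  | zero => simp
  | succ k ih =>
    have hm : (⟪·, m⟫).HasTemperateGrowth := ((innerSL ℝ).flip m).hasTemperateGrowth
    rw [Function.iterate_succ_apply', ← fourier_coe, fourier_lineDerivOp_eq]
    simp only [smulLeftCLM_apply_apply hm, smul_apply, fourier_coe, ih, ← Complex.coe_smul,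
      smul_smul]
    congr 1
    ring

end LineDeriv

section MultiIndex

variable {n : ℕ} {F : Type*} [NormedAddCommGroup F]

noncomputable def iteratedPartialDerivOp [NormedSpace ℝ F] (k : Fin n → ℕ)
    (ψ : 𝓢(EuclideanSpace ℝ (Fin n), F)) : 𝓢(EuclideanSpace ℝ (Fin n), F) :=
  (List.finRange n).foldr (fun j φ => (∂_{EuclideanSpace.single j (1 : ℝ)})^[k j] φ) ψ

theorem iteratedPartialDerivOp_apply_of_eq_ofReal {f : EuclideanSpace ℝ (Fin n) → ℝ}
    {ψ : 𝓢(EuclideanSpace ℝ (Fin n), ℂ)} (hψ : ∀ x, ψ x = f x) (k : Fin n → ℕ)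
    (x : EuclideanSpace ℝ (Fin n)) : ψ.iteratedPartialDerivOp k x = mpd k f x := by
  rw [iteratedPartialDerivOp, mpd]
  induction List.finRange n generalizing x with
  | nil => exact hψ x
  | cons j l ih =>
    simp only [List.foldr_cons]
    induction k j generalizing x with
    | zero => exact ih x
    | succ m ihm =>
      rw [Function.iterate_succ_apply', Function.iterate_succ_apply']
      exact lineDerivOp_apply_of_eq_ofReal ihm _ x

variable [NormedSpace ℂ F]

theorem fourier_iteratedPartialDerivOp (k : Fin n → ℕ) (ψ : 𝓢(EuclideanSpace ℝ (Fin n), F))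
    (ξ : EuclideanSpace ℝ (Fin n)) :
    𝓕 (⇑(ψ.iteratedPartialDerivOp k)) ξ = (∏ j, (2 * π * I * ξ j) ^ k j) • 𝓕 (⇑ψ) ξ := by
  rw [Fin.prod_univ_def, iteratedPartialDerivOp]
  induction List.finRange n with
  | nil => simp
  | cons j l ih =>
    rw [List.foldr_cons, fourier_iterate_lineDerivOp, ih, List.map_cons, List.prod_cons,
      smul_smul]
    simp [EuclideanSpace.inner_single_right]

noncomputable def constCoeffDiffOp (Q : MvPolynomial (Fin n) ℂ)
    (ψ : 𝓢(EuclideanSpace ℝ (Fin n), F)) : 𝓢(EuclideanSpace ℝ (Fin n), F) :=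
  ∑ k ∈ Q.support, Q.coeff k • ψ.iteratedPartialDerivOp k

theorem fourier_constCoeffDiffOp (Q : MvPolynomial (Fin n) ℂ)
    (ψ : 𝓢(EuclideanSpace ℝ (Fin n), F)) (ξ : EuclideanSpace ℝ (Fin n)) :
    𝓕 (⇑(ψ.constCoeffDiffOp Q)) ξ = eval (fun j => 2 * π * I * ξ j) Q • 𝓕 (⇑ψ) ξ := by
  rw [constCoeffDiffOp, ← fourier_coe, fourier_sum, eval_eq', Finset.sum_smul]
  simp only [sum_apply, fourier_smul, smul_apply, fourier_coe, fourier_iteratedPartialDerivOp,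
    smul_smul]

end MultiIndex

end SchwartzMap

/-- a nonzero constant-coefficient linear differential operator has no
nonzero smooth compactly supported solutions. -/
theorem eq_zero_of_constCoeffPDE {n : ℕ} (P : MvPolynomial (Fin n) ℝ) (hP : P ≠ 0)
    (f : EuclideanSpace ℝ (Fin n) → ℝ) (hf : ContDiff ℝ (⊤ : ℕ∞) f)
    (hsupp : HasCompactSupport f)
    (hpde : ∀ x, ∑ k ∈ P.support, P.coeff k * mpd (fun j => k j) f x = 0) :
    f = 0 := by
  let φ : 𝓢(EuclideanSpace ℝ (Fin n), ℂ) :=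
    (hsupp.comp_left ofReal_zero).toSchwartzMap (ofRealCLM.contDiff.comp hf)
  have hφ : ∀ x, φ x = f x := fun _ => rfl
  have hPDE : φ.constCoeffDiffOp (P.map ofRealHom) = 0 := by
    ext x
    simp only [SchwartzMap.constCoeffDiffOp, support_map_of_injective _ ofRealHom.injective,
      coeff_map, ofRealHom_eq_coe, Complex.coe_smul, sum_apply, smul_apply, real_smul,
      SchwartzMap.iteratedPartialDerivOp_apply_of_eq_ofReal hφ, zero_apply]
    exact_mod_cast hpde x
  have hsymbol : ∀ ξ, eval (fun j => 2 * π * I * ξ j) (P.map ofRealHom) * 𝓕 (⇑φ) ξ = 0 := by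
    intro ξ
    rw [← smul_eq_mul, ← SchwartzMap.fourier_constCoeffDiffOp, hPDE, ← SchwartzMap.fourier_coe,
      FourierTransform.fourier_zero]
    rfl
  have hFφ : 𝓕 φ = 0 := by
    have hP' : P.map ofRealHom ≠ 0 :=
      ((map_injective _ ofRealHom.injective).ne_iff' (map_zero _)).2 hP
    have hg : (fun t : ℝ => 2 * π * I * t).Injective :=
      (mul_right_injective₀ two_pi_I_ne_zero).comp ofReal_injective
    have hu := ((𝓕 φ).continuous.comp (PiLp.continuous_toLp 2 _)).eq_zero_of_eval_mul_eq_zero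
      hP' hg fun x => hsymbol (WithLp.toLp 2 x)
    ext ξ
    exact congr_fun hu ξ.ofLp
  have hφ0 : φ = 0 := calc
    φ = 𝓕⁻ (𝓕 φ) := (fourierInv_fourier_eq φ).symm
    _ = 0 := by rw [hFφ, fourierInv_zero]
  ext x
  simpa [hφ] using congr($hφ0 x)
end

section
/- Let u₁, …, u_m be nonzero vectors in ℝⁿ and let f : ℝⁿ → ℝ be smooth and compactly supported. Define S f = Σ_{i=1}^m 𝒳_{u_i} f. Then applying the composition of directional derivative operators 𝒟_{u_1} ∘ 𝒟_{u_2} ∘ ⋯ ∘ 𝒟_{u_m} to S f yields, at every point x ∈ ℝⁿ, the value (Σ_{j=1}^m (Π_{i ≠ j} 𝒟_{u_i}) f)(x), where Π_{i ≠ j} 𝒟_{u_i} denotes the composition of the operators 𝒟_{u_i} over all indices i ≠ j (in increasing order of i). -/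
open MeasureTheory

/-- The directional derivative operator `𝒟_u`. -/
noncomputable def dirD {n : ℕ} (u : EuclideanSpace ℝ (Fin n))
    (f : EuclideanSpace ℝ (Fin n) → ℝ) : EuclideanSpace ℝ (Fin n) → ℝ :=
  fun x => fderiv ℝ f x u

/-!
Differentiating under the integral sign, `𝒟_w` commutes with every beam transform `𝒳_v`, and
along the ray the fundamental theorem of calculus gives `𝒟_v 𝒳_v f = f`, since `f` vanishes
at `-∞`. In `𝒟_{u_1} ⋯ 𝒟_{u_m} 𝒳_{u_j} f` the factor `𝒟_{u_j}` can therefore be moved next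
to `𝒳_{u_j}`, where it cancels it; summing over `j` gives the theorem.
-/

open Set Filter Metric
open scoped ContDiff Pointwise

section Line

variable {E F : Type*} [NormedAddCommGroup E] [NormedSpace ℝ E]
  [NormedAddCommGroup F] [NormedSpace ℝ F] {g : E → F} {v : E}

theorem isClosedEmbedding_line (hv : v ≠ 0) (x : E) :
    Topology.IsClosedEmbedding fun t : ℝ => x + t • v :=
  (Homeomorph.addLeft x).isClosedEmbedding.comp (isClosedEmbedding_smul_left hv)

theorem HasCompactSupport.comp_line {M : Type*} [Zero M] {φ : E → M} (hφ : HasCompactSupport φ)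
    (hv : v ≠ 0) (x : E) : HasCompactSupport fun t : ℝ => φ (x + t • v) :=
  hφ.comp_isClosedEmbedding (isClosedEmbedding_line hv x)

theorem HasFDerivAt.hasDerivAt_line {x : E} {t : ℝ} {g' : E →L[ℝ] F}
    (hg : HasFDerivAt g g' (x + t • v)) :
    HasDerivAt (fun s : ℝ => g (x + s • v)) (g' v) t := by
  have hl : HasDerivAt (fun s : ℝ => x + s • v) v t := by
    simpa using ((hasDerivAt_id' t).smul_const v).const_add x
  exact hg.comp_hasDerivAt t hl

theorem integral_Iio_fderiv_line [CompleteSpace F] (hg : ContDiff ℝ 1 g)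
    (hcs : HasCompactSupport g) (hv : v ≠ 0) (x : E) :
    ∫ t in Iio (0 : ℝ), fderiv ℝ g (x + t • v) v = g x := by
  have hderiv : ∀ t : ℝ, deriv (fun s : ℝ => g (x + s • v)) t = fderiv ℝ g (x + t • v) v :=
    fun t => ((hg.differentiable one_ne_zero _).hasFDerivAt.hasDerivAt_line).deriv
  have hline : ContDiff ℝ 1 fun t : ℝ => g (x + t • v) := by fun_prop
  simpa [hderiv, integral_Iic_eq_integral_Iio] using
    (hcs.comp_line hv x).integral_Iic_deriv_eq hline 0

theorem hasFDerivAt_setIntegral_line [ProperSpace E] (hg : ContDiff ℝ 1 g)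
    (hcs : HasCompactSupport g) (hv : v ≠ 0) (s : Set ℝ) (x : E) :
    HasFDerivAt (fun y => ∫ t in s, g (y + t • v)) (∫ t in s, fderiv ℝ g (x + t • v)) x := by
  have hg' : Continuous (fderiv ℝ g) := hg.continuous_fderiv one_ne_zero
  obtain ⟨C, hC⟩ := hg'.bounded_above_of_compact_support (hcs.fderiv ℝ)
  set T := (fun t : ℝ => t • v) ⁻¹' (tsupport (fderiv ℝ g) + -closedBall x 1)
  have hT : IsCompact T := (isClosedEmbedding_smul_left hv).isCompact_preimage
    (IsCompact.add (hcs.fderiv ℝ) (isCompact_closedBall x 1).neg)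
  have hvanish : ∀ y ∈ closedBall x 1, ∀ t ∉ T, fderiv ℝ g (y + t • v) = 0 :=
    fun y hy t ht => image_eq_zero_of_notMem_tsupport fun hmem =>
      ht ⟨_, hmem, -y, by simpa using hy, by simp⟩
  refine hasFDerivAt_integral_of_dominated_of_fderiv_le (closedBall_mem_nhds x one_pos)
    (F := fun y t => g (y + t • v)) (F' := fun y t => fderiv ℝ g (y + t • v))
    (bound := T.indicator fun _ => C) ?_ ?_ ?_ ?_ ?_ ?_
  · exact Eventually.of_forall fun y => (by fun_prop : Continuous _).aestronglyMeasurable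
  · exact ((by fun_prop : Continuous _).integrable_of_hasCompactSupport
      (hcs.comp_line hv x)).restrict
  · have : SecondCountableTopologyEither ℝ (E →L[ℝ] F) := secondCountableTopologyEither_of_left _ _
    exact (by fun_prop : Continuous _).aestronglyMeasurable
  · refine Eventually.of_forall fun t y hy => ?_
    by_cases ht : t ∈ T
    · simpa [ht] using hC _
    · simp [ht, hvanish y hy t ht]
  · exact ((integrableOn_const hT.measure_lt_top.ne).integrable_indicator
      hT.measurableSet).restrict
  · exact Eventually.of_forall fun t y _ =>
      (hasFDerivAt_comp_add_right _).2 (hg.differentiable one_ne_zero _).hasFDerivAt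

end Line

section Beam

variable {n : ℕ} {v : EuclideanSpace ℝ (Fin n)} {f g : EuclideanSpace ℝ (Fin n) → ℝ}

theorem hasFDerivAt_beam (hv : v ≠ 0) (hg : ContDiff ℝ 1 g) (hcs : HasCompactSupport g)
    (x : EuclideanSpace ℝ (Fin n)) :
    HasFDerivAt (beam v g) (∫ t in Iio (0 : ℝ), fderiv ℝ g (x + t • v)) x :=
  hasFDerivAt_setIntegral_line hg hcs hv _ x

theorem differentiable_beam (hv : v ≠ 0) (hg : ContDiff ℝ 1 g) (hcs : HasCompactSupport g) :
    Differentiable ℝ (beam v g) :=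
  fun x => (hasFDerivAt_beam hv hg hcs x).differentiableAt

theorem dirD_beam (hv : v ≠ 0) (hg : ContDiff ℝ 1 g) (hcs : HasCompactSupport g)
    (w : EuclideanSpace ℝ (Fin n)) : dirD w (beam v g) = beam v (dirD w g) := by
  funext x
  have hint : Integrable (fun t : ℝ => fderiv ℝ g (x + t • v)) (volume.restrict (Iio 0)) :=
    (((hg.continuous_fderiv one_ne_zero).comp (by fun_prop)).integrable_of_hasCompactSupport
      ((hcs.fderiv ℝ).comp_line hv x)).restrict
  rw [dirD, (hasFDerivAt_beam hv hg hcs x).fderiv, ContinuousLinearMap.integral_apply hint]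
  rfl

theorem dirD_beam_self (hv : v ≠ 0) (hg : ContDiff ℝ 1 g) (hcs : HasCompactSupport g) :
    dirD v (beam v g) = g := by
  rw [dirD_beam hv hg hcs]
  funext x
  exact integral_Iio_fderiv_line hg hcs hv x

theorem dirD_fun_sum {ι : Type*} {s : Finset ι} {F : ι → EuclideanSpace ℝ (Fin n) → ℝ}
    (hF : ∀ i ∈ s, Differentiable ℝ (F i)) (w : EuclideanSpace ℝ (Fin n)) :
    dirD w (fun y => ∑ i ∈ s, F i y) = fun y => ∑ i ∈ s, dirD w (F i) y := by
  funext x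
  rw [dirD, fderiv_fun_sum fun i hi => (hF i hi).differentiableAt, _root_.sum_apply]
  rfl

theorem ContDiff.dirD (hg : ContDiff ℝ ∞ g) (w : EuclideanSpace ℝ (Fin n)) :
    ContDiff ℝ ∞ (dirD w g) :=
  (hg.fderiv_right le_rfl).clm_apply contDiff_const

theorem HasCompactSupport.dirD (hg : HasCompactSupport g) (w : EuclideanSpace ℝ (Fin n)) :
    HasCompactSupport (dirD w g) :=
  hg.fderiv_apply ℝ w

section Foldr

variable {ι : Type*} (u : ι → EuclideanSpace ℝ (Fin n))

theorem contDiff_foldr_dirD (hf : ContDiff ℝ ∞ f) (l : List ι) :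
    ContDiff ℝ ∞ (l.foldr (fun i g => dirD (u i) g) f) := by
  induction l with
  | nil => exact hf
  | cons i l ih => exact ih.dirD (u i)

theorem hasCompactSupport_foldr_dirD (hf : HasCompactSupport f) (l : List ι) :
    HasCompactSupport (l.foldr (fun i g => dirD (u i) g) f) := by
  induction l with
  | nil => exact hf
  | cons i l ih => exact ih.dirD (u i)

theorem foldr_dirD_beam (hv : v ≠ 0) (hf : ContDiff ℝ ∞ f) (hcs : HasCompactSupport f)
    (l : List ι) :
    l.foldr (fun i g => dirD (u i) g) (beam v f)
      = beam v (l.foldr (fun i g => dirD (u i) g) f) := by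
  induction l with
  | nil => rfl
  | cons i l ih =>
    rw [List.foldr_cons, List.foldr_cons, ih, dirD_beam hv
      ((contDiff_foldr_dirD u hf l).of_le (by simp)) (hasCompactSupport_foldr_dirD u hcs l)]

theorem foldr_dirD_beam_of_mem [DecidableEq ι] {j : ι} (hj : u j ≠ 0) (hf : ContDiff ℝ ∞ f)
    (hcs : HasCompactSupport f) {l : List ι} (hl : l.Nodup) (hjl : j ∈ l) :
    l.foldr (fun i g => dirD (u i) g) (beam (u j) f)
      = (l.filter fun i => i ≠ j).foldr (fun i g => dirD (u i) g) f := by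
  induction l with
  | nil => cases hjl
  | cons i l ih =>
    obtain ⟨hil, hl⟩ := List.nodup_cons.1 hl
    by_cases hij : i = j
    · subst hij
      have hfilter : (l.filter fun k => k ≠ i) = l :=
        List.filter_eq_self.2 fun k hk => by simpa using ne_of_mem_of_not_mem hk hil
      rw [List.filter_cons_of_neg (by simp), hfilter, List.foldr_cons, foldr_dirD_beam u hj hf hcs,
        dirD_beam_self hj ((contDiff_foldr_dirD u hf l).of_le (by simp))
          (hasCompactSupport_foldr_dirD u hcs l)]
    · rw [List.filter_cons_of_pos (by simpa using hij), List.foldr_cons, List.foldr_cons,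
        ih hl (List.mem_of_ne_of_mem (Ne.symm hij) hjl)]

theorem foldr_dirD_sum_beam {s : Finset ι} (hu : ∀ i ∈ s, u i ≠ 0) (hf : ContDiff ℝ ∞ f)
    (hcs : HasCompactSupport f) (l : List ι) :
    l.foldr (fun i g => dirD (u i) g) (fun y => ∑ i ∈ s, beam (u i) f y)
      = fun y => ∑ i ∈ s, beam (u i) (l.foldr (fun i g => dirD (u i) g) f) y := by
  induction l with
  | nil => rfl
  | cons i l ih =>
    have hl : ContDiff ℝ 1 _ := (contDiff_foldr_dirD u hf l).of_le (by simp)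
    have hcsl := hasCompactSupport_foldr_dirD u hcs l
    rw [List.foldr_cons, ih, dirD_fun_sum fun k hk => differentiable_beam (hu k hk) hl hcsl]
    funext y
    exact Finset.sum_congr rfl fun k hk => by rw [dirD_beam (hu k hk) hl hcsl]; rfl

end Foldr

end Beam

/-- applying `𝒟_{u_1} ∘ ⋯ ∘ 𝒟_{u_m}` to the order-1 star transform
`S f = Σ_i 𝒳_{u_i} f` yields `Σ_j (Π_{i ≠ j} 𝒟_{u_i}) f`. -/
theorem dirD_comp_star {n m : ℕ} (u : Fin m → EuclideanSpace ℝ (Fin n))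
    (hu : ∀ i, u i ≠ 0) (f : EuclideanSpace ℝ (Fin n) → ℝ)
    (hf : ContDiff ℝ (⊤ : ℕ∞) f) (hsupp : HasCompactSupport f)
    (x : EuclideanSpace ℝ (Fin n)) :
    ((List.finRange m).foldr (fun i g => dirD (u i) g)
        (fun y => ∑ i, beam (u i) f y)) x
      = ∑ j, (((List.finRange m).filter (fun i => i ≠ j)).foldr
          (fun i g => dirD (u i) g) f) x := by
  rw [foldr_dirD_sum_beam u (fun i _ => hu i) hf hsupp]
  refine Finset.sum_congr rfl fun j _ => ?_
  rw [← foldr_dirD_beam u (hu j) hf hsupp, foldr_dirD_beam_of_mem u (hu j) hf hsupp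
    (List.nodup_finRange m) (List.mem_finRange j)]
end

section
/- Let U be an m × n real matrix and 1 ≤ r ≤ m. For a multi-index k : Fin n → ℕ with Σ_j k(j) = r, fix any function c : Fin r → Fin n whose fiber over each j ∈ Fin n has exactly k(j) elements, and define the generalized permanent perm(U, k) = Σ_{φ : Fin r ↪ Fin m injective} Π_{l ∈ Fin r} U(φ l, c l) (this value does not depend on the choice of c). Then for every ξ ∈ ℝⁿ: e_r(U *ᵥ ξ) = Σ_{k : Fin n → ℕ, Σ_j k(j) = r} (Π_j (k j)!)⁻¹ · perm(U, k) · Π_j (ξ j)^{k j}, where e_r(U *ᵥ ξ) denotes the elementary symmetric polynomial e_r applied to the m coordinates of the vector U *ᵥ ξ. -/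
open Finset

lemma lemA {r n : ℕ} (f g : Fin r → Fin n)
    (h : ∀ j, (univ.filter (fun l => f l = j)).card = (univ.filter (fun l => g l = j)).card) :
    ∃ σ : Equiv.Perm (Fin r), f = g ∘ σ := by
  have e : ∀ j, { l // f l = j } ≃ { l // g l = j } := fun j =>
    Fintype.equivOfCardEq (by
      simp only [Fintype.card_subtype]
      exact h j)
  exact ⟨Equiv.ofFiberEquiv e, funext fun l => (Equiv.ofFiberEquiv_map e l).symm⟩

lemma lemB {r n : ℕ} (c : Fin r → Fin n) (k : Fin n → ℕ)
    (hck : ∀ j, (univ.filter (fun l => c l = j)).card = k j) :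
    (univ.filter (fun g : Fin r → Fin n =>
        ∀ j, (univ.filter (fun l => g l = j)).card = k j)).card * ∏ j, (k j).factorial
      = r.factorial := by
  classical
  set FS := univ.filter (fun g : Fin r → Fin n =>
      ∀ j, (univ.filter (fun l => g l = j)).card = k j) with hFS
  -- count permutations fiberwise over σ ↦ c ∘ σ
  have hmaps : ∀ σ : Equiv.Perm (Fin r), σ ∈ (univ : Finset (Equiv.Perm (Fin r))) →
      (fun σ : Equiv.Perm (Fin r) => c ∘ σ) σ ∈ FS := by
    intro σ _
    simp only [hFS, mem_filter, mem_univ, true_and]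
    intro j
    rw [← hck j]
    apply Finset.card_bij (fun l _ => σ l)
    · intro l hl; simp only [mem_filter, mem_univ, true_and] at hl ⊢; exact hl
    · intro a _ b _ hab; exact σ.injective hab
    · intro b hb
      exact ⟨σ.symm b, by simpa [Function.comp] using (mem_filter.mp hb).2, by simp⟩
  have hcard := Finset.card_eq_sum_card_fiberwise hmaps
  rw [Finset.card_univ, Fintype.card_perm, Fintype.card_fin] at hcard
  -- each fiber has card ∏ (k j)!
  have hfib : ∀ g ∈ FS,
      (univ.filter (fun σ : Equiv.Perm (Fin r) => c ∘ σ = g)).card = ∏ j, (k j).factorial := by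
    intro g hg
    simp only [hFS, mem_filter, mem_univ, true_and] at hg
    obtain ⟨σ₀, hσ₀⟩ := lemA g c (fun j => by rw [hg j, hck j])
    -- g = c ∘ σ₀
    have key : (univ.filter (fun σ : Equiv.Perm (Fin r) => c ∘ σ = g)).card
        = (univ.filter (fun σ : Equiv.Perm (Fin r) => c ∘ σ = c)).card := by
      apply Finset.card_bij' (fun σ _ => σ * σ₀⁻¹) (fun τ _ => τ * σ₀)
      · intro σ hσ
        simp only [mem_filter, mem_univ, true_and] at hσ ⊢
        funext x
        simp only [Function.comp, Equiv.Perm.mul_apply]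
        have := congrFun hσ (σ₀⁻¹ x)
        simp only [Function.comp] at this
        rw [this, hσ₀]
        simp
      · intro τ hτ
        simp only [mem_filter, mem_univ, true_and] at hτ ⊢
        funext x
        simp only [Function.comp, Equiv.Perm.mul_apply]
        have := congrFun hτ (σ₀ x)
        simp only [Function.comp] at this
        rw [this, hσ₀]
        simp [Function.comp]
      · intro σ _; simp [mul_assoc]
      · intro τ _; simp [mul_assoc]
    rw [key, ← Fintype.card_subtype, DomMulAct.stabilizer_card c]
    exact Finset.prod_congr rfl fun j _ => by rw [Fintype.card_subtype, hck j]
  rw [Finset.sum_congr rfl hfib, Finset.sum_const, smul_eq_mul] at hcard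
  exact hcard.symm

lemma lemC {r m : ℕ} (hrm : r ≤ m) (v : Fin m → ℝ) :
    ∑ φ : Fin r ↪ Fin m, ∏ l, v (φ l)
      = (r.factorial : ℝ) * ∑ S ∈ (univ : Finset (Fin m)).powersetCard r, ∏ i ∈ S, v i := by
  classical
  have hmaps : ∀ φ : Fin r ↪ Fin m, φ ∈ (univ : Finset (Fin r ↪ Fin m)) →
      univ.map φ ∈ (univ : Finset (Fin m)).powersetCard r := by
    intro φ _
    rw [mem_powersetCard]
    exact ⟨subset_univ _, by simp⟩
  rw [← Finset.sum_fiberwise_of_maps_to hmaps (fun φ => ∏ l, v (φ l))]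
  rw [Finset.mul_sum]
  refine Finset.sum_congr rfl fun S hS => ?_
  rw [mem_powersetCard] at hS
  have hterm : ∀ φ ∈ univ.filter (fun φ : Fin r ↪ Fin m => univ.map φ = S),
      ∏ l, v (φ l) = ∏ i ∈ S, v i := by
    intro φ hφ
    rw [mem_filter] at hφ
    rw [← hφ.2, Finset.prod_map]
  rw [Finset.sum_congr rfl hterm, Finset.sum_const, nsmul_eq_mul]
  congr 2
  -- card of embeddings with image S is r!
  have : (univ.filter (fun φ : Fin r ↪ Fin m => univ.map φ = S)).card
      = Fintype.card (Fin r ↪ {x // x ∈ S}) := by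
    rw [← Finset.card_univ]
    refine Finset.card_bij' (fun φ hφ => (⟨fun l => ⟨φ l, by
        rw [mem_filter] at hφ
        rw [← hφ.2]
        exact mem_map_of_mem _ (mem_univ l)⟩, fun a b hab => φ.injective (by
        simpa using congrArg Subtype.val hab)⟩ : Fin r ↪ {x // x ∈ S}))
      (fun ψ _ => ψ.trans (Function.Embedding.subtype _)) ?_ ?_ ?_ ?_
    · intro φ _; exact mem_univ _
    · intro ψ _
      rw [mem_filter]
      refine ⟨mem_univ _, ?_⟩
      apply Finset.eq_of_subset_of_card_le
      · intro x hx
        rw [Finset.mem_map] at hx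
        obtain ⟨l, _, rfl⟩ := hx
        exact (ψ l).2
      · rw [hS.2]; simp
    · intro φ _; ext l; rfl
    · intro ψ _; ext l; rfl
  rw [this, Fintype.card_embedding_eq]
  simp [Fintype.card_coe, hS.2, Nat.descFactorial_self]
/-- explicit expansion of `e_r(U *ᵥ ξ)` as a polynomial in `ξ`,
with coefficients given by generalized permanents of `U`. For each multi-index
`k : Fin n →₀ ℕ` with `Σ_j k j = r`, a column-assignment function `c k : Fin r → Fin n`
whose fiber over `j` has `k j` elements is fixed, and the generalized permanent is
`perm(U, k) = Σ_{φ : Fin r ↪ Fin m} Π_l U (φ l) (c k l)`. -/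
theorem esymm_mulVec_expansion {m n : ℕ} (U : Matrix (Fin m) (Fin n) ℝ)
    (r : ℕ) (hr1 : 1 ≤ r) (hrm : r ≤ m)
    (c : (Fin n →₀ ℕ) → Fin r → Fin n)
    (hc : ∀ k ∈ Finset.finsuppAntidiag (Finset.univ : Finset (Fin n)) r,
      ∀ j : Fin n, (Finset.univ.filter (fun l => c k l = j)).card = k j)
    (ξ : Fin n → ℝ) :
    ∑ S ∈ (Finset.univ : Finset (Fin m)).powersetCard r, ∏ i ∈ S, U.mulVec ξ i
      = ∑ k ∈ Finset.finsuppAntidiag (Finset.univ : Finset (Fin n)) r,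
          (∏ j, (Nat.factorial (k j) : ℝ))⁻¹ *
            (∑ φ : Fin r ↪ Fin m, ∏ l, U (φ l) (c k l)) *
            ∏ j, ξ j ^ (k j) := by
  classical
  have hr0 : (r.factorial : ℝ) ≠ 0 := Nat.cast_ne_zero.mpr r.factorial_ne_zero
  apply mul_left_cancel₀ hr0
  rw [← lemC hrm (U.mulVec ξ)]
  -- expand each mulVec product
  have expand : ∀ φ : Fin r ↪ Fin m,
      ∏ l, U.mulVec ξ (φ l)
        = ∑ g : Fin r → Fin n, (∏ l, U (φ l) (g l)) * ∏ l, ξ (g l) := by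
    intro φ
    have : ∀ l : Fin r, U.mulVec ξ (φ l) = ∑ j ∈ univ, U (φ l) j * ξ j := by
      intro l; rfl
    rw [Finset.prod_congr rfl (fun l _ => this l), Finset.prod_univ_sum]
    rw [Fintype.piFinset_univ]
    exact Finset.sum_congr rfl fun g _ => by rw [Finset.prod_mul_distrib]
  rw [Finset.sum_congr rfl (fun φ _ => expand φ), Finset.sum_comm]
  -- the weight function
  set W : (Fin r → Fin n) → ℝ :=
    fun g => ∑ φ : Fin r ↪ Fin m, (∏ l, U (φ l) (g l)) * ∏ l, ξ (g l) with hW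
  -- the multi-index map
  set ind : (Fin r → Fin n) → (Fin n →₀ ℕ) :=
    fun g => Finsupp.equivFunOnFinite.symm (fun j => (univ.filter (fun l => g l = j)).card)
    with hind
  have hind_apply : ∀ g j, ind g j = (univ.filter (fun l => g l = j)).card := by
    intro g j; rfl
  have hmaps : ∀ g : Fin r → Fin n, g ∈ (univ : Finset (Fin r → Fin n)) →
      ind g ∈ Finset.finsuppAntidiag (univ : Finset (Fin n)) r := by
    intro g _
    rw [Finset.mem_finsuppAntidiag]
    constructor
    · rw [show (univ : Finset (Fin n)).sum (ind g)
          = ∑ j, (univ.filter (fun l => g l = j)).card from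
        Finset.sum_congr rfl fun j _ => hind_apply g j]
      rw [← Finset.card_eq_sum_card_fiberwise (fun l _ => mem_univ (g l))]
      simp
    · exact fun j _ => mem_univ j
  rw [← Finset.sum_fiberwise_of_maps_to hmaps W]
  rw [Finset.mul_sum]
  refine Finset.sum_congr rfl fun k hk => ?_
  -- constant value on each fiber
  have hval : ∀ g ∈ univ.filter (fun g => ind g = k),
      W g = (∑ φ : Fin r ↪ Fin m, ∏ l, U (φ l) (c k l)) * ∏ j, ξ j ^ (k j) := by
    intro g hg
    rw [mem_filter] at hg
    have hfib : ∀ j, (univ.filter (fun l => g l = j)).card = k j := by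
      intro j; rw [← hind_apply g j, hg.2]
    obtain ⟨σ, hσ⟩ := lemA g (c k) (fun j => by rw [hfib j, hc k hk j])
    have h1 : ∏ l, ξ (g l) = ∏ j, ξ j ^ (k j) := by
      rw [← Finset.prod_fiberwise_of_maps_to (fun l _ => mem_univ (g l)) (fun l => ξ (g l))]
      refine Finset.prod_congr rfl fun j _ => ?_
      rw [Finset.prod_congr rfl (fun l hl => by
        rw [(mem_filter.mp hl).2] : ∀ l ∈ univ.filter (fun l => g l = j), ξ (g l) = ξ j)]
      rw [Finset.prod_const, hfib j]
    have h2 : ∑ φ : Fin r ↪ Fin m, ∏ l, U (φ l) (g l)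
        = ∑ φ : Fin r ↪ Fin m, ∏ l, U (φ l) (c k l) := by
      refine Fintype.sum_equiv
        ⟨fun ψ => σ.symm.toEmbedding.trans ψ, fun ψ => σ.toEmbedding.trans ψ,
          fun ψ => by ext l; simp, fun ψ => by ext l; simp⟩ _ _ fun ψ => ?_
      have : ∀ l, g l = c k (σ l) := fun l => congrFun hσ l
      rw [Finset.prod_congr rfl (fun l _ => by rw [this l])]
      have := Equiv.prod_comp σ (fun l => U (ψ (σ.symm l)) (c k l))
      simp only [Equiv.symm_apply_apply] at this
      rw [this]
      rfl
    rw [hW]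
    simp only [← Finset.sum_mul]
    rw [h1, h2]
  rw [Finset.sum_congr rfl hval, Finset.sum_const, nsmul_eq_mul]
  -- counting
  have hcount : (univ.filter (fun g : Fin r → Fin n => ind g = k)).card * ∏ j, (k j).factorial
      = r.factorial := by
    rw [show (univ.filter (fun g : Fin r → Fin n => ind g = k))
        = (univ.filter (fun g : Fin r → Fin n =>
            ∀ j, (univ.filter (fun l => g l = j)).card = k j)) from ?_]
    · exact lemB (c k) (⇑k) (hc k hk)
    · ext g
      simp only [mem_filter, mem_univ, true_and]
      constructor
      · intro h j; rw [← hind_apply g j, h]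
      · intro h
        ext j
        rw [hind_apply, h j]
  have hPk : (∏ j, ((k j).factorial : ℝ)) ≠ 0 := by
    refine Finset.prod_ne_zero_iff.mpr fun j _ => ?_
    exact Nat.cast_ne_zero.mpr (Nat.factorial_ne_zero _)
  have : ((univ.filter (fun g : Fin r → Fin n => ind g = k)).card : ℝ)
      = (r.factorial : ℝ) * (∏ j, ((k j).factorial : ℝ))⁻¹ := by
    rw [eq_mul_inv_iff_mul_eq₀ hPk]
    rw [← Nat.cast_prod, ← Nat.cast_mul, hcount]
  rw [this]
  ring
end

section
/- Let u₁, …, u_k be nonzero vectors in ℝⁿ (k ≥ 1, n ≥ 1). Consider the order-1 star transform whose 2k branch vectors come in pairs of opposite signs, S f = Σ_{i=1}^k (𝒳_{u_i} f + 𝒳_{-u_i} f). Then S is not injective on smooth compactly supported functions: there exists a smooth compactly supported function f : ℝⁿ → ℝ with f ≠ 0 such that (S f)(x) = 0 for every x ∈ ℝⁿ. -/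
open MeasureTheory

/-!
The beams along `u` and `-u` together integrate `f` over the whole line `x + ℝ u`, and that
integral vanishes when `f = Δ_[u] h` is a forward difference along `u` of a compactly supported
continuous `h`, by translation invariance of Lebesgue measure. Since forward differences commute,
`f = Δ_[u₁] ⋯ Δ_[uₖ] g` for a bump function `g` is such a difference along every `uᵢ`. It is
nonzero because a compactly supported function with a nonzero period vanishes.
-/

open Filter Topology fwdDiff

theorem fwdDiff_comm {M G : Type*} [AddCommMonoid M] [AddCommGroup G] (v w : M) (f : M → G) :
    Δ_[v] (Δ_[w] f) = Δ_[w] (Δ_[v] f) := by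
  funext x
  simp only [fwdDiff, add_right_comm x w v]
  abel

theorem fwdDiff_eq_zero_iff_periodic {M G : Type*} [AddCommMonoid M] [AddCommGroup G] {h : M}
    {f : M → G} : Δ_[h] f = 0 ↔ Function.Periodic f h := by
  simp [funext_iff, fwdDiff, Function.Periodic, sub_eq_zero]

theorem ContDiff.fwdDiff {𝕜 E F : Type*} [NontriviallyNormedField 𝕜] [NormedAddCommGroup E]
    [NormedSpace 𝕜 E] [NormedAddCommGroup F] [NormedSpace 𝕜 F] {n : WithTop ℕ∞} {f : E → F}
    (hf : ContDiff 𝕜 n f) (h : E) : ContDiff 𝕜 n (Δ_[h] f) :=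
  (hf.comp (contDiff_id.add contDiff_const)).sub hf

theorem HasCompactSupport.fwdDiff {M G : Type*} [TopologicalSpace M] [AddCommGroup M]
    [ContinuousAdd M] [AddCommGroup G] {f : M → G} (hf : HasCompactSupport f) (h : M) :
    HasCompactSupport (Δ_[h] f) :=
  (hf.comp_homeomorph (Homeomorph.addRight h)).sub hf

theorem Function.Periodic.eq_zero_of_hasCompactSupport {E F : Type*} [NormedAddCommGroup E]
    [NormedSpace ℝ E] [TopologicalSpace F] [T2Space F] [Zero F] {f : E → F} {h : E}
    (hp : Function.Periodic f h) (hh : h ≠ 0) (hf : HasCompactSupport f) : f = 0 := by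
  funext x
  have hcocompact : Tendsto (fun m : ℕ => x + m • h) atTop (cocompact E) := by
    refine tendsto_cocompact_of_tendsto_dist_comp_atTop x ?_
    simp only [dist_self_add_left, RCLike.norm_nsmul ℝ, nsmul_eq_mul]
    exact tendsto_natCast_atTop_atTop.atTop_mul_const (norm_pos_iff.mpr hh)
  refine tendsto_nhds_unique ?_ (hf.is_zero_at_infty.comp hcocompact)
  simp only [Function.comp_def, hp.nsmul _ x, tendsto_const_nhds]

theorem fwdDiff_ne_zero_of_hasCompactSupport {E F : Type*} [NormedAddCommGroup E]
    [NormedSpace ℝ E] [AddCommGroup F] [TopologicalSpace F] [T2Space F] {f : E → F} {h : E}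
    (hh : h ≠ 0) (hf : HasCompactSupport f) (hf0 : f ≠ 0) : Δ_[h] f ≠ 0 :=
  fun hΔ => hf0 ((fwdDiff_eq_zero_iff_periodic.mp hΔ).eq_zero_of_hasCompactSupport hh hf)

section IterFwdDiff

variable {M G : Type*} [AddCommMonoid M] [AddCommGroup G]

def iterFwdDiff (l : List M) (f : M → G) : M → G :=
  l.foldr fwdDiff f

theorem iterFwdDiff_induction {p : (M → G) → Prop} {l : List M} {f : M → G}
    (hp : ∀ v ∈ l, ∀ g, p g → p (Δ_[v] g)) (hf : p f) : p (iterFwdDiff l f) := by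
  induction l with
  | nil => exact hf
  | cons v l ih =>
    exact hp v List.mem_cons_self _
      (ih fun w hw => hp w (List.mem_cons_of_mem v hw))

theorem iterFwdDiff_eq_fwdDiff_erase [DecidableEq M] {l : List M} {v : M} (hv : v ∈ l)
    (f : M → G) : iterFwdDiff l f = Δ_[v] (iterFwdDiff (l.erase v) f) :=
  have : LeftCommutative (fwdDiff : M → (M → G) → M → G) := ⟨fwdDiff_comm⟩
  (List.perm_cons_erase hv).foldr_eq f

end IterFwdDiff

section LineIntegral

variable {E F : Type*} [NormedAddCommGroup E] [NormedSpace ℝ E] [NormedAddCommGroup F]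

theorem integrable_comp_line {g : E → F} (hg : Continuous g) (hs : HasCompactSupport g)
    (x : E) {u : E} (hu : u ≠ 0) : Integrable (fun t : ℝ => g (x + t • u)) := by
  have hline : IsClosedEmbedding fun t : ℝ => x + t • u :=
    (Homeomorph.addLeft x).isClosedEmbedding.comp (isClosedEmbedding_smul_left hu)
  exact (hg.comp hline.continuous).integrable_of_hasCompactSupport
    (hs.comp_isClosedEmbedding hline)

theorem integral_fwdDiff_comp_line [NormedSpace ℝ F] {g : E → F} (x u : E)
    (hg : Integrable (fun t : ℝ => g (x + t • u))) :
    ∫ t : ℝ, Δ_[u] g (x + t • u) = 0 := by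
  have hshift : ∀ t : ℝ, x + t • u + u = x + (t + 1) • u := fun t => by
    rw [add_smul, one_smul, add_assoc]
  simp only [fwdDiff, hshift]
  rw [integral_sub (hg.comp_add_right 1) hg,
    integral_add_right_eq_self (fun t : ℝ => g (x + t • u)) 1, sub_self]

end LineIntegral

theorem beam_add_beam_neg {n : ℕ} {u : EuclideanSpace ℝ (Fin n)}
    {f : EuclideanSpace ℝ (Fin n) → ℝ} {x : EuclideanSpace ℝ (Fin n)}
    (hf : Integrable (fun t : ℝ => f (x + t • u))) :
    beam u f x + beam (-u) f x = ∫ t : ℝ, f (x + t • u) := by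
  have hneg : beam (-u) f x = ∫ t in Set.Ici (0 : ℝ), f (x + t • u) := by
    simp only [beam, smul_neg, ← neg_smul]
    rw [setIntegral_congr_set Iio_ae_eq_Iic, integral_comp_neg_Iic (f := fun t => f (x + t • u)),
      neg_zero, integral_Ici_eq_integral_Ioi]
  rw [hneg, beam, intervalIntegral.integral_Iio_add_Ici hf.integrableOn hf.integrableOn]

theorem beam_add_beam_neg_fwdDiff {n : ℕ} {u : EuclideanSpace ℝ (Fin n)} (hu : u ≠ 0)
    {h : EuclideanSpace ℝ (Fin n) → ℝ} (hc : Continuous h) (hs : HasCompactSupport h)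
    (x : EuclideanSpace ℝ (Fin n)) :
    beam u (Δ_[u] h) x + beam (-u) (Δ_[u] h) x = 0 := by
  have hΔc : Continuous (Δ_[u] h) := (hc.comp (continuous_id.add continuous_const)).sub hc
  rw [beam_add_beam_neg (integrable_comp_line hΔc (hs.fwdDiff u) x hu),
    integral_fwdDiff_comp_line x u (integrable_comp_line hc hs x hu)]

theorem star_opposite_pairs_not_injective_general {n k : ℕ}
    (u : Fin k → EuclideanSpace ℝ (Fin n)) (hu : ∀ i, u i ≠ 0) :
    ∃ f : EuclideanSpace ℝ (Fin n) → ℝ, ContDiff ℝ (⊤ : ℕ∞) f ∧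
      HasCompactSupport f ∧ f ≠ 0 ∧
      ∀ x, ∑ i, (beam (u i) f x + beam (-u i) f x) = 0 := by
  classical
  obtain ⟨g, hg, hgs, hg0⟩ : ∃ g : EuclideanSpace ℝ (Fin n) → ℝ,
      ContDiff ℝ (⊤ : ℕ∞) g ∧ HasCompactSupport g ∧ g ≠ 0 :=
    let b : ContDiffBump (0 : EuclideanSpace ℝ (Fin n)) := default
    ⟨b, b.contDiff, b.hasCompactSupport,
      fun h => (b.pos_of_mem_ball (Metric.mem_ball_self b.rOut_pos)).ne' (congrFun h 0)⟩
  have hsmooth : ∀ l : List (EuclideanSpace ℝ (Fin n)),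
      ContDiff ℝ (⊤ : ℕ∞) (iterFwdDiff l g) ∧ HasCompactSupport (iterFwdDiff l g) :=
    fun _ => iterFwdDiff_induction (p := fun f => ContDiff ℝ (⊤ : ℕ∞) f ∧ HasCompactSupport f)
      (fun v _ _ hf => ⟨hf.1.fwdDiff v, hf.2.fwdDiff v⟩) ⟨hg, hgs⟩
  have hne : iterFwdDiff (List.ofFn u) g ≠ 0 := by
    refine (iterFwdDiff_induction (p := fun f => HasCompactSupport f ∧ f ≠ 0) ?_ ⟨hgs, hg0⟩).2
    intro v hv f hf
    obtain ⟨i, rfl⟩ := List.mem_ofFn.mp hv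
    exact ⟨hf.1.fwdDiff _, fwdDiff_ne_zero_of_hasCompactSupport (hu i) hf.1 hf.2⟩
  refine ⟨_, (hsmooth _).1, (hsmooth _).2, hne, fun x => Finset.sum_eq_zero fun i _ => ?_⟩
  rw [iterFwdDiff_eq_fwdDiff_erase (List.mem_ofFn.mpr ⟨i, rfl⟩)]
  exact beam_add_beam_neg_fwdDiff (hu i) (hsmooth _).1.continuous (hsmooth _).2 x

/-- an order-1 star transform whose branch vectors come in pairs of
opposite signs, `S f = Σ_i (𝒳_{u_i} f + 𝒳_{-u_i} f)`, is not injective on smooth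
compactly supported functions. -/
theorem star_opposite_pairs_not_injective {n k : ℕ} (hn : 1 ≤ n) (hk : 1 ≤ k)
    (u : Fin k → EuclideanSpace ℝ (Fin n)) (hu : ∀ i, u i ≠ 0) :
    ∃ f : EuclideanSpace ℝ (Fin n) → ℝ, ContDiff ℝ (⊤ : ℕ∞) f ∧
      HasCompactSupport f ∧ f ≠ 0 ∧
      ∀ x, ∑ i, (beam (u i) f x + beam (-u i) f x) = 0 :=
  star_opposite_pairs_not_injective_general u hu
end

section
/- Let n ≥ 1 and m = 2n, and let σ be a fixed-point-free involution of Fin m (a permutation with σ ∘ σ = id and σ(i) ≠ i for all i). Then the set W_σ = {x : Fin m → ℝ | x(σ i) = −x(i) for all i} is a linear subspace of ℝ^m of dimension n, and it is contained in the zero locus of the elementary symmetric polynomial of degree m − 1: for every x ∈ W_σ, e_{m-1}(x) = 0. -/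
/-!
Antisymmetry under `σ` determines `x` from its values at the indices `i < σ i`, which form half
of `Fin (2 * n)`; hence `W_σ` has dimension `n`. The `(m - 1)`-subsets are the complements
`univ.erase j`, and since `x (σ j) = -x j`, the term omitting `σ j` is the negative of the term
omitting `j`; the involution `σ` thus cancels the terms of `e_{m-1}(x)` in pairs.
-/

open Finset

namespace Finset

variable {ι : Type*} [Fintype ι] [DecidableEq ι]

theorem powersetCard_card_sub_one_univ [Nonempty ι] :
    (univ : Finset ι).powersetCard (Fintype.card ι - 1) = univ.image univ.erase := by
  ext S
  simp only [mem_powersetCard_univ, mem_image, mem_univ, true_and, ← compl_singleton]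
  constructor
  · intro hS
    have hcompl : #Sᶜ = 1 := by
      have := Fintype.card_pos (α := ι)
      rw [card_compl, hS]
      omega
    obtain ⟨j, hj⟩ := card_eq_one.mp hcompl
    exact ⟨j, by rw [← hj, compl_compl]⟩
  · rintro ⟨j, rfl⟩
    rw [card_compl, card_singleton]

theorem sum_powersetCard_card_sub_one_univ {M : Type*} [AddCommMonoid M] [Nonempty ι]
    (f : Finset ι → M) :
    ∑ S ∈ (univ : Finset ι).powersetCard (Fintype.card ι - 1), f S = ∑ j, f (univ.erase j) := by
  rw [powersetCard_card_sub_one_univ, sum_image (erase_injOn univ)]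

theorem prod_erase_eq_neg_prod_erase {R : Type*} [CommMonoid R] [HasDistribNeg R] {x : ι → R}
    {a b : ι} (hab : a ≠ b) (hx : x b = -x a) :
    ∏ i ∈ univ.erase b, x i = -∏ i ∈ univ.erase a, x i := by
  rw [← mul_prod_erase _ x (mem_erase.mpr ⟨hab, mem_univ a⟩),
    ← mul_prod_erase _ x (mem_erase.mpr ⟨hab.symm, mem_univ b⟩), erase_right_comm, hx, neg_mul,
    neg_neg]

end Finset

namespace Equiv.Perm

variable {ι R : Type*}

theorem sum_prod_erase_eq_zero [Fintype ι] [DecidableEq ι] [CommRing R] {σ : Perm ι}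
    (hinv : Function.Involutive σ) (hfpf : ∀ i, σ i ≠ i) {x : ι → R}
    (hx : ∀ i, x (σ i) = -x i) : ∑ j, ∏ i ∈ univ.erase j, x i = 0 :=
  sum_ninvolution σ
    (fun j => by rw [prod_erase_eq_neg_prod_erase (hfpf j).symm (hx j), add_neg_cancel])
    (fun j _ => hfpf j) (fun j => mem_univ _) hinv

variable [Ring R]

variable (R) in
def antisymmetricSubmodule (σ : Perm ι) : Submodule R (ι → R) :=
  LinearMap.ker (LinearMap.funLeft R R σ + LinearMap.id)

theorem mem_antisymmetricSubmodule {σ : Perm ι} {x : ι → R} :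
    x ∈ σ.antisymmetricSubmodule R ↔ ∀ i, x (σ i) = -x i := by
  simp [antisymmetricSubmodule, funext_iff, LinearMap.funLeft_apply, add_eq_zero_iff_eq_neg]

section LinearOrder

variable [LinearOrder ι] {σ : Perm ι}

theorem not_lt_apply_iff_apply_lt (hfpf : ∀ i, σ i ≠ i) {i : ι} : ¬ i < σ i ↔ σ i < i :=
  not_lt.trans (hfpf i).le_iff_lt

theorem apply_lt_apply_apply_of_not_lt (hinv : Function.Involutive σ) (hfpf : ∀ i, σ i ≠ i)
    {i : ι} (h : ¬ i < σ i) : σ i < σ (σ i) := by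
  rw [hinv i]
  exact (not_lt_apply_iff_apply_lt hfpf).mp h

theorem two_mul_card_lt_apply [Fintype ι] (hinv : Function.Involutive σ) (hfpf : ∀ i, σ i ≠ i) :
    2 * Fintype.card {i // i < σ i} = Fintype.card ι := by
  have hswap : Fintype.card {i // ¬ i < σ i} = Fintype.card {i // i < σ i} :=
    Fintype.card_congr <| σ.subtypeEquiv fun i => by
      rw [hinv i, not_lt_apply_iff_apply_lt hfpf]
  have := Fintype.card_subtype_le fun i => i < σ i
  rw [Fintype.card_subtype_compl] at hswap
  omega

variable (R) in
def antisymmetricSubmoduleEquiv (hinv : Function.Involutive σ) (hfpf : ∀ i, σ i ≠ i) :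
    σ.antisymmetricSubmodule R ≃ₗ[R] ({i // i < σ i} → R) where
  toFun x r := x.1 r
  invFun y := ⟨fun i => if h : i < σ i then y ⟨i, h⟩
      else -y ⟨σ i, apply_lt_apply_apply_of_not_lt hinv hfpf h⟩, by
    refine mem_antisymmetricSubmodule.mpr fun i => ?_
    by_cases h : i < σ i
    · have h' : ¬ σ i < i := h.asymm
      simp only [hinv i, dif_neg h', dif_pos h]
    · have h' : σ i < i := (not_lt_apply_iff_apply_lt hfpf).mp h
      simp only [hinv i, dif_pos h', dif_neg h, neg_neg]⟩
  map_add' _ _ := rfl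
  map_smul' _ _ := rfl
  left_inv x := by
    ext i
    by_cases h : i < σ i
    · simp [dif_pos h]
    · have hx := mem_antisymmetricSubmodule.mp x.2 (σ i)
      rw [hinv i] at hx
      simp [dif_neg h, hx]
  right_inv y := by
    ext r
    simp [dif_pos r.2]

theorem two_mul_finrank_antisymmetricSubmodule [Fintype ι] [StrongRankCondition R]
    (hinv : Function.Involutive σ) (hfpf : ∀ i, σ i ≠ i) :
    2 * Module.finrank R (σ.antisymmetricSubmodule R) = Fintype.card ι := by
  rw [(antisymmetricSubmoduleEquiv R hinv hfpf).finrank_eq, Module.finrank_fintype_fun_eq_card,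
    two_mul_card_lt_apply hinv hfpf]

end LinearOrder

end Equiv.Perm

/-- for a fixed-point-free involution `σ` of `Fin (2n)`, the set
`W_σ = {x | x (σ i) = -x i for all i}` is a linear subspace of `ℝ^{2n}` of dimension `n`,
contained in the zero locus of the elementary symmetric polynomial of degree `2n - 1`. -/
theorem antisymmetric_subspace_in_esymm_zero_locus (n : ℕ) (hn : 1 ≤ n)
    (σ : Equiv.Perm (Fin (2 * n))) (hinv : ∀ i, σ (σ i) = i) (hfpf : ∀ i, σ i ≠ i) :
    (∃ W : Submodule ℝ (Fin (2 * n) → ℝ),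
        (W : Set (Fin (2 * n) → ℝ)) = {x | ∀ i, x (σ i) = -x i} ∧
        Module.finrank ℝ W = n) ∧
      ∀ x : Fin (2 * n) → ℝ, (∀ i, x (σ i) = -x i) →
        ∑ S ∈ (Finset.univ : Finset (Fin (2 * n))).powersetCard (2 * n - 1),
          ∏ i ∈ S, x i = 0 := by
  refine ⟨⟨σ.antisymmetricSubmodule ℝ, Set.ext fun _ => Equiv.Perm.mem_antisymmetricSubmodule, ?_⟩,
    fun x hx => ?_⟩
  · have hdim := σ.two_mul_finrank_antisymmetricSubmodule (R := ℝ) hinv hfpf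
    rw [Fintype.card_fin] at hdim
    omega
  · have : Nonempty (Fin (2 * n)) := ⟨⟨0, by omega⟩⟩
    have hsum := sum_powersetCard_card_sub_one_univ fun S : Finset (Fin (2 * n)) => ∏ i ∈ S, x i
    rw [Fintype.card_fin] at hsum
    exact hsum.trans (σ.sum_prod_erase_eq_zero hinv hfpf hx)
end

section
/- Let m ≥ 3 and let u_k = (cos(2πk/m), sin(2πk/m)) ∈ ℝ² for k = 0, 1, …, m−1 be the radius vectors of the vertices of a regular m-gon centered at the origin. Then for every odd r with 0 < r < m and every ξ ∈ ℝ², the elementary symmetric polynomial e_r applied to the tuple (⟨u_0, ξ⟩, ⟨u_1, ξ⟩, …, ⟨u_{m-1}, ξ⟩) equals 0. -/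
/-!
With `ζ = exp (2πi/m)` and `w = ξ₁ + i ξ₂`, the dot product `⟨u_k, ξ⟩` equals
`(ζ^k w̄ + ζ^(-k) w) / 2`. Expanding its `j`-th power binomially, the power sum
`∑ₖ ⟨u_k, ξ⟩^j` becomes a combination of geometric sums `∑ₖ ζ^((2t - j) k)`, all of which vanish
when `j` is odd and `j < m`, since then `0 < |2t - j| < m`. Newton's identities write `r e_r` as a
signed sum of `e_p p_q` with `p + q = r`, `p < r`; for odd `r` one of `p`, `q` is odd, so by
strong induction every odd `e_r` with `r < m` vanishes.
-/

open Finset MvPolynomial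

theorem IsPrimitiveRoot.geom_sum_zpow_eq_zero {K : Type*} [Field K] {ζ : K} {m : ℕ}
    (hζ : IsPrimitiveRoot ζ m) {l : ℤ} (hl : ¬ (m : ℤ) ∣ l) :
    ∑ k ∈ range m, (ζ ^ l) ^ k = 0 := by
  rw [geom_sum_eq ((hζ.zpow_eq_one_iff_dvd l).not.mpr hl), ← zpow_natCast, ← zpow_mul,
    mul_comm, zpow_mul, zpow_natCast, hζ.pow_eq_one, one_zpow, sub_self, zero_div]

theorem IsPrimitiveRoot.sum_odd_pow_add_inv_eq_zero {K : Type*} [Field K] {ζ : K} {m j : ℕ}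
    (hζ : IsPrimitiveRoot ζ m) (b c : K) (hj : Odd j) (hjm : j < m) :
    ∑ k ∈ range m, (ζ ^ k * b + (ζ ^ k)⁻¹ * c) ^ j = 0 := by
  have hζ0 : ζ ≠ 0 := hζ.ne_zero (by omega)
  have hexpand : ∀ k : ℕ, (ζ ^ k * b + (ζ ^ k)⁻¹ * c) ^ j =
      ∑ t ∈ range (j + 1), b ^ t * c ^ (j - t) * j.choose t * (ζ ^ (2 * t - j : ℤ)) ^ k := by
    intro k
    rw [add_pow]
    refine sum_congr rfl fun t ht => ?_
    have hpow : (ζ ^ (2 * t - j : ℤ)) ^ k = (ζ ^ k) ^ t * (ζ ^ k)⁻¹ ^ (j - t) := by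
      rw [← zpow_natCast (ζ ^ _) k, ← zpow_mul, mul_comm, zpow_mul, zpow_natCast,
        show (2 * t - j : ℤ) = t - (j - t : ℕ) by grind, zpow_sub₀ (pow_ne_zero _ hζ0),
        zpow_natCast, zpow_natCast, div_eq_mul_inv, inv_pow]
    rw [hpow]
    ring
  rw [sum_congr rfl fun k _ => hexpand k, sum_comm]
  refine sum_eq_zero fun t ht => ?_
  have htj : t ≤ j := Nat.lt_succ_iff.mp (mem_range.mp ht)
  have hndvd : ¬ (m : ℤ) ∣ 2 * t - j := fun hdvd => by
    have := Int.eq_zero_of_abs_lt_dvd hdvd (abs_lt.mpr ⟨by omega, by omega⟩)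
    obtain ⟨u, rfl⟩ := hj
    omega
  rw [← mul_sum, hζ.geom_sum_zpow_eq_zero hndvd, mul_zero]

theorem esymm_eq_zero_of_odd_of_psum_odd_eq_zero {σ R : Type*} [Fintype σ] [CommRing R]
    [NoZeroDivisors R] [CharZero R] (a : σ → R) {r : ℕ} (hr : Odd r)
    (hpsum : ∀ j ≤ r, Odd j → ∑ i, a i ^ j = 0) :
    ∑ S ∈ univ.powersetCard r, ∏ i ∈ S, a i = 0 := by
  induction r using Nat.strong_induction_on with
  | _ r ih =>
  set e : ℕ → R := fun n => ∑ S ∈ univ.powersetCard n, ∏ i ∈ S, a i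
  have hnewton : (r : R) * e r = (-1) ^ (r + 1) *
      ∑ x ∈ antidiagonal r with x.1 < r, (-1) ^ x.1 * e x.1 * ∑ i, a i ^ x.2 := by
    simpa only [map_mul, map_natCast, map_sum, map_pow, map_neg, map_one,
      aeval_esymm_eq_multiset_esymm, esymm_map_val, psum, aeval_X] using
      congrArg (aeval a) (mul_esymm_eq_sum σ R r)
  have hterms : ∀ x ∈ {x ∈ antidiagonal r | x.1 < r},
      (-1) ^ x.1 * e x.1 * ∑ i, a i ^ x.2 = 0 := by
    rintro ⟨p, q⟩ hpq
    rw [mem_filter, HasAntidiagonal.mem_antidiagonal] at hpq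
    obtain ⟨hpq, hpr⟩ := hpq
    rcases Nat.even_or_odd q with hq | hq
    · have hep : e p = 0 :=
        ih p hpr ((Nat.odd_add.mp (hpq ▸ hr)).mpr hq) fun j hj => hpsum j (by omega)
      rw [hep, mul_zero, zero_mul]
    · rw [hpsum q (by omega) hq, mul_zero]
  rw [sum_eq_zero hterms, mul_zero, mul_eq_zero] at hnewton
  exact hnewton.resolve_left (Nat.cast_ne_zero.mpr hr.pos.ne')

theorem Complex.ofReal_cos_mul_add_sin_mul (θ x y : ℝ) :
    ((Real.cos θ * x + Real.sin θ * y : ℝ) : ℂ) =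
      exp (θ * I) * ((x - y * I) / 2) + (exp (θ * I))⁻¹ * ((x + y * I) / 2) := by
  rw [← exp_neg, ← neg_mul, exp_mul_I, exp_mul_I, cos_neg, sin_neg]
  push_cast [← ofReal_cos, ← ofReal_sin]
  linear_combination (Real.sin θ * y : ℂ) * I_sq

theorem esymm_odd_regular_polygon_eq_zero_general (m : ℕ)
    (r : ℕ) (hodd : Odd r) (hrm : r < m) (ξ : ℝ × ℝ) :
    ∑ S ∈ (Finset.univ : Finset (Fin m)).powersetCard r,
      ∏ k ∈ S,
        (Real.cos (2 * Real.pi * (k : ℕ) / m) * ξ.1 +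
          Real.sin (2 * Real.pi * (k : ℕ) / m) * ξ.2) = 0 := by
  refine esymm_eq_zero_of_odd_of_psum_odd_eq_zero _ hodd fun j hjr hj => ?_
  have hζ := Complex.isPrimitiveRoot_exp m (by omega)
  have hvertex : ∀ k : ℕ, Complex.exp (2 * Real.pi * Complex.I / m) ^ k =
      Complex.exp ((2 * Real.pi * k / m : ℝ) * Complex.I) := fun k => by
    rw [← Complex.exp_nat_mul]
    push_cast
    ring_nf
  apply Complex.ofReal_injective
  simp only [Complex.ofReal_sum, Complex.ofReal_pow, Complex.ofReal_zero]
  rw [Fin.sum_univ_eq_sum_range (fun k => ((Real.cos (2 * Real.pi * k / m) * ξ.1 +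
    Real.sin (2 * Real.pi * k / m) * ξ.2 : ℝ) : ℂ) ^ j)]
  simp only [Complex.ofReal_cos_mul_add_sin_mul, ← hvertex]
  exact hζ.sum_odd_pow_add_inv_eq_zero _ _ hj (by omega)

/-- for the vertices `u_k = (cos(2πk/m), sin(2πk/m))` of a regular
`m`-gon centered at the origin, every odd-degree elementary symmetric polynomial
(of degree `0 < r < m`) of the dot products `⟨u_k, ξ⟩` vanishes identically. -/
theorem esymm_odd_regular_polygon_eq_zero (m : ℕ) (hm : 3 ≤ m)
    (r : ℕ) (hodd : Odd r) (h0 : 0 < r) (hrm : r < m) (ξ : ℝ × ℝ) :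
    ∑ S ∈ (Finset.univ : Finset (Fin m)).powersetCard r,
      ∏ k ∈ S,
        (Real.cos (2 * Real.pi * (k : ℕ) / m) * ξ.1 +
          Real.sin (2 * Real.pi * (k : ℕ) / m) * ξ.2) = 0 :=
  esymm_odd_regular_polygon_eq_zero_general m r hodd hrm ξ
end

section
/- Let Ω ⊆ ℝⁿ be an open, bounded, convex set, let u ∈ ℝⁿ be nonzero, and let f : ℝⁿ → ℝ be continuous. For x ∈ Ω define T(x) = sup { t ≥ 0 : x − t • u ∈ Ω } and the truncated divergent beam transform (𝒳_u^Ω f)(x) = ∫_{−T(x)}^0 f(x + t • u) dt. Then for every x ∈ Ω, the function s ↦ (𝒳_u^Ω f)(x + s • u) is differentiable at s = 0 with derivative f(x); that is, the directional derivative along u of 𝒳_u^Ω f equals f on Ω (𝒟_u 𝒳_u^Ω f = f). -/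
open MeasureTheory

/-- The exit time `T(x) = sup {t ≥ 0 : x - t • u ∈ Ω}` of the ray from `x` in
direction `-u`. -/
noncomputable def exitTime {n : ℕ} (Ω : Set (EuclideanSpace ℝ (Fin n)))
    (u : EuclideanSpace ℝ (Fin n)) (x : EuclideanSpace ℝ (Fin n)) : ℝ :=
  sSup {t : ℝ | 0 ≤ t ∧ x - t • u ∈ Ω}

/-- The truncated divergent beam transform on a region `Ω`:
`(𝒳_u^Ω f)(x) = ∫_{-T(x)}^0 f(x + t • u) dt`. -/
noncomputable def beamTrunc {n : ℕ} (Ω : Set (EuclideanSpace ℝ (Fin n)))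
    (u : EuclideanSpace ℝ (Fin n)) (f : EuclideanSpace ℝ (Fin n) → ℝ)
    (x : EuclideanSpace ℝ (Fin n)) : ℝ :=
  ∫ t in Set.Ioo (-(exitTime Ω u x)) (0 : ℝ), f (x + t • u)

/-- on an open bounded convex region `Ω`, the directional derivative
along `u` of the truncated divergent beam transform of a continuous function `f`
recovers `f`: at every `x ∈ Ω`, `s ↦ (𝒳_u^Ω f)(x + s • u)` is differentiable at
`s = 0` with derivative `f x`. -/
theorem dirDeriv_beamTrunc {n : ℕ} (Ω : Set (EuclideanSpace ℝ (Fin n)))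
    (hΩo : IsOpen Ω) (hΩb : Bornology.IsBounded Ω) (hΩc : Convex ℝ Ω)
    (u : EuclideanSpace ℝ (Fin n)) (hu : u ≠ 0)
    (f : EuclideanSpace ℝ (Fin n) → ℝ) (hf : Continuous f) :
    ∀ x ∈ Ω, HasDerivAt (fun s : ℝ => beamTrunc Ω u f (x + s • u)) (f x) 0 := by
  intro x hx
  obtain ⟨R, hR⟩ := hΩb.subset_closedBall 0
  have hu' : (0 : ℝ) < ‖u‖ := norm_pos_iff.mpr hu
  -- boundedness of the exit-time defining sets
  have hbdd : ∀ y : EuclideanSpace ℝ (Fin n),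
      BddAbove {t : ℝ | 0 ≤ t ∧ y - t • u ∈ Ω} := by
    intro y
    refine ⟨(‖y‖ + R) / ‖u‖, ?_⟩
    rintro t ⟨ht0, htΩ⟩
    have h1 : ‖y - t • u‖ ≤ R := by simpa using hR htΩ
    have h2 : ‖t • u‖ ≤ ‖y‖ + R := by
      have : ‖y - (y - t • u)‖ ≤ ‖y‖ + ‖y - t • u‖ := norm_sub_le _ _
      rw [sub_sub_cancel] at this
      linarith
    rw [norm_smul, Real.norm_eq_abs, abs_of_nonneg ht0] at h2
    rw [le_div_iff₀ hu']
    exact h2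
  -- the preimage set S
  set S : Set ℝ := (fun t : ℝ => x - t • u) ⁻¹' Ω with hS
  have hSopen : IsOpen S :=
    hΩo.preimage (continuous_const.sub (continuous_id.smul continuous_const))
  have h0S : (0 : ℝ) ∈ S := by simp [hS, hx]
  obtain ⟨δ₀, hδ₀, hball⟩ := Metric.isOpen_iff.mp hSopen 0 h0S
  set T : ℝ := exitTime Ω u x with hT
  have hmemS : ∀ s : ℝ, |s| < δ₀ → x - s • u ∈ Ω := by
    intro s hs
    have : s ∈ S := hball (by simpa [Real.dist_eq] using hs)
    simpa [hS] using this
  have hT0 : 0 < T := by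
    have hmem : δ₀ / 2 ∈ {t : ℝ | 0 ≤ t ∧ x - t • u ∈ Ω} := by
      refine ⟨by linarith, hmemS _ ?_⟩
      rw [abs_of_nonneg (by linarith)]; linarith
    have := le_csSup (hbdd x) hmem
    calc (0:ℝ) < δ₀ / 2 := by linarith
    _ ≤ T := this
  set δ : ℝ := min δ₀ T with hδdef
  have hδ : 0 < δ := lt_min hδ₀ hT0
  have hδT : δ ≤ T := min_le_right _ _
  have hδ0' : δ ≤ δ₀ := min_le_left _ _
  -- key: exit time shifts linearly
  have hshift : ∀ s : ℝ, |s| < δ → exitTime Ω u (x + s • u) = T + s := by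
    intro s hs
    have hsδ₀ : |s| < δ₀ := lt_of_lt_of_le hs hδ0'
    have hsT : |s| < T := lt_of_lt_of_le hs hδT
    have hsub : ∀ t : ℝ, x + s • u - t • u = x - (t - s) • u := by
      intro t; rw [sub_smul]; abel
    have h0mem : (0 : ℝ) ∈ {t : ℝ | 0 ≤ t ∧ x + s • u - t • u ∈ Ω} := by
      refine ⟨le_refl 0, ?_⟩
      rw [hsub]
      refine hmemS _ ?_
      rw [zero_sub, abs_neg]; exact hsδ₀
    have hlub : IsLUB {t : ℝ | 0 ≤ t ∧ x + s • u - t • u ∈ Ω} (T + s) := by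
      constructor
      · rintro t ⟨ht0, htΩ⟩
        rw [hsub] at htΩ
        by_cases h : 0 ≤ t - s
        · have : t - s ≤ T := le_csSup (hbdd x) ⟨h, htΩ⟩
          linarith
        · have habs := abs_lt.mp hsT
          linarith
      · intro b hb
        have hb0 : 0 ≤ b := hb h0mem
        have hTb : T ≤ b - s := by
          refine csSup_le ⟨0, le_refl 0, by simpa using hx⟩ ?_
          rintro t ⟨ht0, htΩ⟩
          by_cases h : 0 ≤ t + s
          · have : t + s ≤ b := hb ⟨h, by rw [hsub]; simpa using htΩ⟩
            linarith
          · linarith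
        linarith
    rw [exitTime, hlub.csSup_eq ⟨0, h0mem⟩]
  -- the auxiliary function
  set g : ℝ → ℝ := fun r => f (x + r • u) with hg
  have hgc : Continuous g :=
    hf.comp (continuous_const.add (continuous_id.smul continuous_const))
  have key : ∀ s : ℝ, |s| < δ →
      beamTrunc Ω u f (x + s • u) = ∫ r in (-T)..s, g r := by
    intro s hs
    have hsT : |s| < T := lt_of_lt_of_le hs hδT
    have habs := abs_lt.mp hsT
    have hTs : 0 < T + s := by linarith
    rw [beamTrunc, hshift s hs]
    have h1 : (∫ t in Set.Ioo (-(T + s)) (0:ℝ), f (x + s • u + t • u))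
        = ∫ t in (-(T + s))..(0:ℝ), f (x + s • u + t • u) := by
      rw [intervalIntegral.integral_of_le (by linarith : -(T+s) ≤ 0),
        integral_Ioc_eq_integral_Ioo]
    rw [h1]
    have h2 : ∀ t : ℝ, f (x + s • u + t • u) = g (t + s) := by
      intro t
      have : x + s • u + t • u = x + (t + s) • u := by rw [add_smul]; abel
      rw [hg, this]
    simp_rw [h2]
    rw [intervalIntegral.integral_comp_add_right]
    congr 1 <;> ring
  -- derivative of the FTC function
  have hderiv : HasDerivAt (fun s : ℝ => ∫ r in (-T)..s, g r) (f x) 0 := by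
    have h := intervalIntegral.integral_hasDerivAt_right
      (hgc.intervalIntegrable (-T) 0)
      ⟨Set.univ, Filter.univ_mem, (hgc.aestronglyMeasurable).restrict⟩
      hgc.continuousAt
    have hg0 : g 0 = f x := by simp [hg]
    rwa [hg0] at h
  refine hderiv.congr_of_eventuallyEq ?_
  filter_upwards [Metric.ball_mem_nhds (0:ℝ) hδ] with s hs
  exact key s (by simpa [Real.dist_eq] using hs)
end
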